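/- arXiv:2411.07366 — 2 statements merged into one kernel-verified Lean document; each statement's English description precedes it below -/
import Mathlib

section
/- Let X be a spectral topological space written as an inverse limit X = lim X_j of a cofiltered system of spectral spaces with quasi-compact transition maps, and let (V_j ⊆ X_j) be compatible quasi-compact open subsets (V_j is the preimage of V_{j0} for j ≥ j0) whose inverse limit equals X (i.e., lim V_j = X inside lim X_j). Then V_j = X_j for all sufficiently large j. -/
/-!
In the constructible topology every `X j` is compact and Hausdorff, since a quasi-compact
open separating two points is clopen there; spectral maps stay continuous and the complements
`X j \ V j` are closed. If no `V j` were all of `X j`, these complements would form an inverse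
system of nonempty closed subsets of compact Hausdorff spaces, whose limit is nonempty by
compactness of the product; a point of it lies in `lim X j` but not in `lim V j`.
-/

open Set Topology WithTopology

section ConstructibleTopology

variable {X Y : Type*} [TopologicalSpace X] [TopologicalSpace Y]

lemma WithConstructibleTopology.isClopen_preimage_ofTopology {U : Set X} (hU : IsOpen U)
    (hU' : IsCompact U) : IsClopen (ofTopology ⁻¹' U : Set (WithConstructibleTopology X)) := by
  refine ⟨isOpen_compl_iff.1 ?_, hU'.isOpen_constructibleTopology_of_isOpen hU⟩
  refine IsCompact.isOpen_constructibleTopology_of_isClosed (s := Uᶜ) ?_ hU.isClosed_compl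
  rwa [compl_compl]

lemma PrespectralSpace.exists_isOpen_isCompact_xor_mem [T0Space X] [PrespectralSpace X]
    {x y : X} (h : x ≠ y) : ∃ W : Set X, IsOpen W ∧ IsCompact W ∧ Xor (x ∈ W) (y ∈ W) := by
  obtain ⟨U, hU, hxy | hyx⟩ := exists_isOpen_xor_mem h
  · obtain ⟨W, ⟨hWo, hWc⟩, hxW, hWU⟩ := isTopologicalBasis.exists_subset_of_mem_open hxy.1 hU
    exact ⟨W, hWo, hWc, .inl ⟨hxW, fun hyW => hxy.2 (hWU hyW)⟩⟩
  · obtain ⟨W, ⟨hWo, hWc⟩, hyW, hWU⟩ := isTopologicalBasis.exists_subset_of_mem_open hyx.1 hU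
    exact ⟨W, hWo, hWc, .inr ⟨hyW, fun hxW => hyx.2 (hWU hxW)⟩⟩

instance [T0Space X] [PrespectralSpace X] :
    TotallySeparatedSpace (WithConstructibleTopology X) := by
  refine totallySeparatedSpace_iff_exists_isClopen.2 fun x y hxy => ?_
  obtain ⟨W, hWo, hWc, ⟨hxW, hyW⟩ | ⟨hyW, hxW⟩⟩ :=
    PrespectralSpace.exists_isOpen_isCompact_xor_mem (ofTopology_injective _ |>.ne hxy)
  · exact ⟨_, WithConstructibleTopology.isClopen_preimage_ofTopology hWo hWc, hxW, hyW⟩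
  · exact ⟨_, (WithConstructibleTopology.isClopen_preimage_ofTopology hWo hWc).compl, hxW,
      not_not.2 hyW⟩

lemma IsSpectralMap.continuous_constructibleTopology {g : X → Y} (hg : IsSpectralMap g) :
    Continuous[constructibleTopology X, constructibleTopology Y] g := by
  refine continuous_generateFrom_iff.2 ?_
  rintro s (⟨hso, hsc⟩ | ⟨hsc, hsc'⟩)
  · exact (hsc.preimage_of_isOpen hg hso).isOpen_constructibleTopology_of_isOpen
      (hso.preimage hg.continuous)
  · refine IsCompact.isOpen_constructibleTopology_of_isClosed ?_ (hsc.preimage hg.continuous)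
    exact hsc'.preimage_of_isOpen hg hsc.isOpen_compl

lemma IsSpectralMap.continuous_withConstructibleTopology {g : X → Y} (hg : IsSpectralMap g) :
    Continuous fun x : WithConstructibleTopology X =>
      toTopology (constructibleTopology Y) (g x.ofTopology) :=
  ⟨fun _ hs => @Continuous.isOpen_preimage _ _ (constructibleTopology X) (constructibleTopology Y) g
    hg.continuous_constructibleTopology _ hs⟩

end ConstructibleTopology

section InverseLimit

variable {J : Type*} [Preorder J] [IsDirected J (· ≤ ·)] [Nonempty J]
  {Y : J → Type*} [∀ j, TopologicalSpace (Y j)] [∀ j, CompactSpace (Y j)] [∀ j, T2Space (Y j)]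

theorem exists_compatible_forall_mem_of_isClosed (g : ∀ {i j : J}, i ≤ j → Y j → Y i)
    (hg_comp : ∀ {i j k : J} (hij : i ≤ j) (hjk : j ≤ k) (y : Y k),
      g hij (g hjk y) = g (hij.trans hjk) y)
    (hg_cont : ∀ {i j : J} (h : i ≤ j), Continuous (g h))
    (Z : ∀ j, Set (Y j)) (hZ_closed : ∀ j, IsClosed (Z j)) (hZ_ne : ∀ j, (Z j).Nonempty)
    (hZ_maps : ∀ {i j : J} (h : i ≤ j), MapsTo (g h) (Z j) (Z i)) :
    ∃ u : ∀ j, Y j, (∀ (i j : J) (h : i ≤ j), g h (u j) = u i) ∧ ∀ j, u j ∈ Z j := by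
  classical
  let K : J → Set (∀ j, Y j) := fun i =>
    {u | (∀ (a b : J) (h : a ≤ b), b ≤ i → g h (u b) = u a) ∧ u i ∈ Z i}
  have hK_closed : ∀ i, IsClosed (K i) := by
    intro i
    simp only [K, ofPred_and, ofPred_forall]
    exact .inter (isClosed_iInter fun a => isClosed_iInter fun b => isClosed_iInter fun h =>
        isClosed_iInter fun _ => isClosed_eq ((hg_cont h).comp (continuous_apply b))
          (continuous_apply a))
      ((hZ_closed i).preimage (continuous_apply i))
  have hK_anti : Antitone K := by
    intro i k hik u ⟨hu_compat, hu_mem⟩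
    refine ⟨fun a b h hb => hu_compat a b h (hb.trans hik), ?_⟩
    rw [← hu_compat i k hik le_rfl]
    exact hZ_maps hik hu_mem
  have hK_ne : ∀ i, (K i).Nonempty := by
    intro i
    obtain ⟨z, hz⟩ := hZ_ne i
    refine ⟨fun a => if h : a ≤ i then g h z else (hZ_ne a).some, fun a b h hb => ?_, ?_⟩
    · simp only [dif_pos hb, dif_pos (h.trans hb), hg_comp]
    · simp only [dif_pos le_rfl]
      exact hZ_maps le_rfl hz
  obtain ⟨u, hu⟩ := IsCompact.nonempty_iInter_of_directed_nonempty_isCompact_isClosed K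
    hK_anti.directed_ge hK_ne (fun i => (hK_closed i).isCompact) hK_closed
  rw [mem_iInter] at hu
  exact ⟨u, fun i j h => (hu j).1 i j h le_rfl, fun j => (hu j).2⟩

end InverseLimit

theorem stmt14_general (J : Type*) [Preorder J] [IsDirected J (· ≤ ·)] [Nonempty J]
    (X : J → Type*) [∀ j, TopologicalSpace (X j)]
    -- each `X j` is a spectral space:
    [∀ j, CompactSpace (X j)] [∀ j, T0Space (X j)] [∀ j, QuasiSober (X j)]
    [∀ j, QuasiSeparatedSpace (X j)]
    (hbasis : ∀ j, TopologicalSpace.IsTopologicalBasis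
      {U : Set (X j) | IsOpen U ∧ IsCompact U})
    -- the transition maps, spectral and compatible:
    (f : ∀ {i j : J}, i ≤ j → X j → X i)
    (hf_comp : ∀ {i j k : J} (hij : i ≤ j) (hjk : j ≤ k) (x : X k),
      f hij (f hjk x) = f (hij.trans hjk) x)
    (hf_spectral : ∀ {i j : J} (h : i ≤ j), IsSpectralMap (f h))
    -- compatible quasi-compact opens:
    (V : ∀ j, Set (X j))
    (hV_open : ∀ j, IsOpen (V j)) (hV_cpt : ∀ j, IsCompact (V j))
    (hV_compat : ∀ {i j : J} (h : i ≤ j), V j = f h ⁻¹' V i)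
    -- the inverse limit of the `V_j` is all of the inverse limit of the `X_j`:
    (hlim : ∀ u : {u : ∀ j, X j // ∀ (i j : J) (h : i ≤ j), f h (u j) = u i},
      ∀ j, u.1 j ∈ V j) :
    ∃ j₀ : J, ∀ j, j₀ ≤ j → V j = Set.univ := by
  have : ∀ j, PrespectralSpace (X j) := fun j => ⟨hbasis j⟩
  suffices ∃ j₀, V j₀ = univ by
    obtain ⟨j₀, hj₀⟩ := this
    exact ⟨j₀, fun j hj => by rw [hV_compat hj, hj₀, preimage_univ]⟩
  by_contra! hV
  have hZ_ne : ∀ j, (ofTopology ⁻¹' (V j)ᶜ : Set (WithConstructibleTopology (X j))).Nonempty :=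
    fun j => (nonempty_compl.2 (hV j)).preimage (ofTopology_surjective _)
  obtain ⟨u, hu_compat, hu_notMem⟩ := exists_compatible_forall_mem_of_isClosed
    (Y := fun j => WithConstructibleTopology (X j))
    (fun h y => toTopology _ (f h y.ofTopology)) (fun hij hjk _ => by rw [hf_comp])
    (fun h => (hf_spectral h).continuous_withConstructibleTopology)
    (fun j => ofTopology ⁻¹' (V j)ᶜ)
    (fun j => (WithConstructibleTopology.isClopen_preimage_ofTopology (hV_open j)
      (hV_cpt j)).compl.isClosed)
    hZ_ne (fun h y hy => by rwa [hV_compat h] at hy)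
  obtain ⟨j⟩ := ‹Nonempty J›
  exact hu_notMem j (hlim ⟨fun j => (u j).ofTopology,
    fun i j h => congrArg ofTopology (hu_compat i j h)⟩ j)

/-- Let `X = lim X_j` be an inverse limit of a cofiltered system of spectral
spaces with quasi-compact (spectral) transition maps, and let `V_j ⊆ X_j` be compatible
quasi-compact open subsets whose inverse limit equals `X` (every point of the limit lies in
every `V_j`). Then `V_j = X_j` for all sufficiently large `j`.

Spectral spaces are encoded as compact, T0, quasi-sober, quasi-separated spaces in which the
quasi-compact open sets form a topological basis. -/
theorem stmt14 (J : Type*) [Preorder J] [IsDirected J (· ≤ ·)] [Nonempty J]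
    (X : J → Type*) [∀ j, TopologicalSpace (X j)]
    -- each `X j` is a spectral space:
    [∀ j, CompactSpace (X j)] [∀ j, T0Space (X j)] [∀ j, QuasiSober (X j)]
    [∀ j, QuasiSeparatedSpace (X j)]
    (hbasis : ∀ j, TopologicalSpace.IsTopologicalBasis
      {U : Set (X j) | IsOpen U ∧ IsCompact U})
    -- the transition maps, spectral and compatible:
    (f : ∀ {i j : J}, i ≤ j → X j → X i)
    (hf_id : ∀ j (x : X j), f (le_refl j) x = x)
    (hf_comp : ∀ {i j k : J} (hij : i ≤ j) (hjk : j ≤ k) (x : X k),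
      f hij (f hjk x) = f (hij.trans hjk) x)
    (hf_spectral : ∀ {i j : J} (h : i ≤ j), IsSpectralMap (f h))
    -- compatible quasi-compact opens:
    (V : ∀ j, Set (X j))
    (hV_open : ∀ j, IsOpen (V j)) (hV_cpt : ∀ j, IsCompact (V j))
    (hV_compat : ∀ {i j : J} (h : i ≤ j), V j = f h ⁻¹' V i)
    -- the inverse limit of the `V_j` is all of the inverse limit of the `X_j`:
    (hlim : ∀ u : {u : ∀ j, X j // ∀ (i j : J) (h : i ≤ j), f h (u j) = u i},
      ∀ j, u.1 j ∈ V j) :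
    ∃ j₀ : J, ∀ j, j₀ ≤ j → V j = Set.univ :=
  stmt14_general J X hbasis f hf_comp hf_spectral V hV_open hV_cpt hV_compat hlim
end

section
/- Let P be an abelian group and T ≤ P a subgroup (the 'divisible identity component'), and suppose the multiplication-by-p pullback [p]^* : P → P acts as multiplication by p² modulo T and as multiplication by p on T. Then, provided T is p-divisible, the colimit of the directed system P →^{[p]^*} P →^{[p]^*} P → ... equals P[1/p] := P ⊗_ℤ ℤ[1/p]. -/
/-- Let `P` be an abelian group, `T ≤ P` a `p`-divisible subgroup, and
`φ : P → P` an endomorphism with `φ(t) = p·t` for `t ∈ T` and `φ(x) ≡ p²·x mod T` for all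
`x`. Then the colimit of the directed system `P →^φ P →^φ P → ...` equals
`P[1/p] = P ⊗ ℤ[1/p]` (realized as the localization of the `ℤ`-module `P` at the powers of
`p`): any concrete colimit `C` of the system is isomorphic to it. -/
theorem stmt17 (p : ℕ) (hp : p.Prime) (P : Type*) [AddCommGroup P]
    (T : AddSubgroup P) (hTdiv : ∀ t ∈ T, ∃ s ∈ T, p • s = t)
    (φ : P →+ P) (hφT : ∀ t ∈ T, φ t = p • t)
    (hφ : ∀ x : P, φ x - (p ^ 2) • x ∈ T)
    -- `C` together with the data exhibiting it as the colimit of `P →^φ P →^φ ...`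
    (C : Type*) [AddCommGroup C] (ψ : ℕ → (P →+ C))
    (hcompat : ∀ (n : ℕ) (x : P), ψ (n + 1) (φ x) = ψ n x)
    (hexhaust : ∀ c : C, ∃ n x, ψ n x = c)
    (hker : ∀ (n : ℕ) (x : P), ψ n x = 0 ↔ ∃ k : ℕ, φ^[k] x = 0) :
    Nonempty (C ≃+ LocalizedModule (Submonoid.powers (p : ℤ)) P) := by
  classical
  set S : Submonoid ℤ := Submonoid.powers (p : ℤ) with hS
  set L := LocalizedModule S P with hL
  -- iterates of φ commute with nsmul
  have hit_smul : ∀ (k : ℕ) (m : ℕ) (x : P), φ^[k] (m • x) = m • φ^[k] x := by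
    intro k
    induction k with
    | zero => intro m x; simp
    | succ k ih =>
      intro m x
      rw [Function.iterate_succ_apply, map_nsmul, ih, Function.iterate_succ_apply]
  -- compatibility along iterates
  have hcompat' : ∀ (k n : ℕ) (x : P), ψ (n + k) (φ^[k] x) = ψ n x := by
    intro k
    induction k with
    | zero => intro n x; simp
    | succ k ih =>
      intro n x
      rw [Function.iterate_succ_apply' φ k x]
      have h1 := hcompat (n + k) (φ^[k] x)
      have h2 := ih n x
      calc ψ (n + (k + 1)) (φ (φ^[k] x)) = ψ (n + k + 1) (φ (φ^[k] x)) := by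
            rw [Nat.add_succ]
        _ = ψ (n + k) (φ^[k] x) := h1
        _ = ψ n x := h2
  -- φ acts as p on T, iterated
  have hTit : ∀ (k : ℕ) (t : P), t ∈ T → φ^[k] t = p ^ k • t ∧ φ^[k] t ∈ T := by
    intro k
    induction k with
    | zero => intro t ht; simpa using ht
    | succ k ih =>
      intro t ht
      obtain ⟨h1, h2⟩ := ih t ht
      rw [Function.iterate_succ_apply' φ k t]
      constructor
      · rw [hφT _ h2, h1, smul_smul, pow_succ, Nat.mul_comm]
      · rw [hφT _ h2]
        exact AddSubgroup.nsmul_mem T h2 p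
  -- iterated divisibility in T
  have hTdiv' : ∀ (k : ℕ) (t : P), t ∈ T → ∃ s ∈ T, p ^ k • s = t := by
    intro k
    induction k with
    | zero => intro t ht; exact ⟨t, ht, by simp⟩
    | succ k ih =>
      intro t ht
      obtain ⟨s, hs, hst⟩ := hTdiv t ht
      obtain ⟨r, hr, hrs⟩ := ih s hs
      exact ⟨r, hr, by rw [pow_succ, Nat.mul_comm, mul_smul, hrs, hst]⟩
  -- ψ n on elements of T lands in image of ψ 0
  have hψT : ∀ (n : ℕ) (t : P), t ∈ T → ∃ s : P, ψ n t = ψ 0 s := by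
    intro n t ht
    obtain ⟨s, hs, hst⟩ := hTdiv' n t ht
    refine ⟨s, ?_⟩
    have := hcompat' n 0 s
    rw [(hTit n s hs).1, hst] at this
    simpa using this
  -- kernel elements are p-power torsion
  have hkerφ : ∀ z : P, φ z = 0 → p ^ 3 • z = 0 := by
    intro z hz
    have h1 : (p ^ 2) • z ∈ T := by
      have := hφ z
      rw [hz, zero_sub] at this
      simpa using (neg_mem_iff (x := (p^2) • z)).mp this
    have h2 : φ ((p ^ 2) • z) = p • ((p ^ 2) • z) := hφT _ h1
    rw [map_nsmul, hz, smul_zero] at h2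
    rw [smul_smul, ← pow_succ'] at h2
    exact h2.symm
  have htor : ∀ (m : ℕ) (x : P), φ^[m] x = 0 → p ^ (3 * m) • x = 0 := by
    intro m
    induction m with
    | zero => intro x hx; simpa using hx
    | succ m ih =>
      intro x hx
      rw [Function.iterate_succ_apply] at hx
      have h1 := ih (φ x) hx
      rw [← map_nsmul] at h1
      have h2 := hkerφ _ h1
      rw [smul_smul, ← pow_add] at h2
      rw [Nat.mul_succ, Nat.add_comm]
      exact h2
  -- multiplication by p is injective on C
  have hinjC : ∀ c : C, p • c = 0 → c = 0 := by
    intro c hc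
    obtain ⟨n, x, rfl⟩ := hexhaust c
    rw [← map_nsmul] at hc
    obtain ⟨k, hk⟩ := (hker n (p • x)).mp hc
    rw [hit_smul] at hk
    -- y := φ^[k] x satisfies p • y = 0; show φ^[2] y = 0
    set y := φ^[k] x with hy
    have h1 : φ y ∈ T := by
      have := hφ y
      have hpy : (p ^ 2) • y = 0 := by
        rw [pow_two, mul_smul, hk, smul_zero]
      rwa [hpy, sub_zero] at this
    have h2 : φ (φ y) = 0 := by
      rw [hφT _ h1, ← map_nsmul, hk, map_zero]
    apply (hker n x).mpr
    refine ⟨2 + k, ?_⟩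
    rw [Function.iterate_add_apply, ← hy]
    show φ (φ y) = 0
    exact h2
  -- multiplication by p is surjective on C
  have hsurjC : ∀ c : C, ∃ c', p • c' = c := by
    intro c
    obtain ⟨n, x, rfl⟩ := hexhaust c
    obtain ⟨s, hs, hst⟩ := hTdiv _ (hφ x)
    refine ⟨ψ (n + 1) (p • x + s), ?_⟩
    have hphix : φ x = p • (p • x + s) := by
      have : φ x = (p ^ 2) • x + p • s := by rw [hst]; ring_nf; abel
      rw [this, smul_add, smul_smul, pow_two]
    rw [← map_nsmul, ← hphix, hcompat]
  -- bijectivity of zsmul by powers of p on C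
  have hzsmul : ∀ c : C, (p : ℤ) • c = p • c := fun c => natCast_zsmul c p
  have hbijp : Function.Bijective (fun c : C => (p : ℤ) • c) := by
    constructor
    · intro a b hab
      simp only at hab
      have h : p • (a - b) = 0 := by
        rw [smul_sub, ← hzsmul, ← hzsmul, hab, sub_self]
      exact sub_eq_zero.mp (hinjC _ h)
    · intro c
      obtain ⟨c', hc'⟩ := hsurjC c
      exact ⟨c', by show (p : ℤ) • c' = c; rw [hzsmul]; exact hc'⟩
  have hbijpow : ∀ k : ℕ, Function.Bijective (fun c : C => ((p : ℤ) ^ k) • c) := by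
    intro k
    induction k with
    | zero => simp only [pow_zero, one_smul]; exact Function.bijective_id
    | succ k ih =>
      have heq : (fun c : C => ((p : ℤ) ^ (k + 1)) • c)
          = (fun c : C => (p : ℤ) • c) ∘ (fun c : C => ((p : ℤ) ^ k) • c) := by
        funext c
        simp [pow_succ, mul_smul, mul_comm]
      rw [heq]
      exact hbijp.comp ih
  -- the hypothesis for LocalizedModule.lift
  have hu : ∀ x : S, IsUnit ((algebraMap ℤ (Module.End ℤ C)) (x : ℤ)) := by
    intro x
    obtain ⟨k, hk⟩ := x.2
    rw [Module.End.isUnit_iff]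
    have hk' : (p : ℤ) ^ k = (x : ℤ) := hk
    have heq : ⇑((algebraMap ℤ (Module.End ℤ C)) (x : ℤ)) = fun c : C => ((p : ℤ) ^ k) • c := by
      funext c
      rw [Module.algebraMap_end_apply, ← hk']
    rw [heq]
    exact hbijpow k
  set g := LocalizedModule.lift S (ψ 0).toIntLinearMap hu with hg
  have hgmk1 : ∀ x : P, g (LocalizedModule.mk x 1) = ψ 0 x := by
    intro x
    have h1 := LocalizedModule.lift_comp S (ψ 0).toIntLinearMap hu
    have h2 := congrArg (fun f : P →ₗ[ℤ] C => f x) h1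
    exact h2
  have hpow : ∀ k : ℕ, (p : ℤ) ^ k ∈ S := fun k => ⟨k, rfl⟩
  set sp : ℕ → S := fun k => ⟨(p : ℤ) ^ k, hpow k⟩ with hsp
  -- additivity of mk in the first argument
  have hmk_add : ∀ (a b : P) (s : S),
      LocalizedModule.mk a s + LocalizedModule.mk b s = LocalizedModule.mk (a + b) s := by
    intro a b s
    rw [LocalizedModule.mk_add_mk, LocalizedModule.mk_eq]
    refine ⟨1, ?_⟩
    simp only [one_smul, Submonoid.smul_def, smul_add, Submonoid.coe_mul, mul_smul]
  have hmk_nsmul : ∀ (m : ℕ) (a : P) (s : S),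
      m • (LocalizedModule.mk a s) = LocalizedModule.mk (m • a) s := by
    intro m
    induction m with
    | zero => intro a s; simp [LocalizedModule.zero_mk]
    | succ m ih =>
      intro a s
      rw [succ_nsmul, ih, hmk_add, succ_nsmul]
  -- relating nsmul on P inside mk to change of denominator
  have hmk_shift : ∀ (a : P) (k : ℕ),
      LocalizedModule.mk ((p : ℕ) • a) (sp (k + 1))
        = LocalizedModule.mk a (sp k) := by
    intro a k
    rw [LocalizedModule.mk_eq]
    refine ⟨1, ?_⟩
    simp only [one_smul, Submonoid.smul_def]
    show ((p : ℤ) ^ k) • ((p : ℕ) • a) = ((p : ℤ) ^ (k + 1)) • a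
    rw [← natCast_zsmul a p, ← mul_smul, ← pow_succ]
  -- injectivity of g
  have hginj : Function.Injective g := by
    rw [injective_iff_map_eq_zero]
    intro z hz
    induction z using LocalizedModule.induction_on with
    | _ x s =>
      obtain ⟨k, hk⟩ := s.2
      have hs : s = sp k := Subtype.ext hk.symm
      subst hs
      have hmk1 : LocalizedModule.mk x (1 : S)
          = (p ^ k) • LocalizedModule.mk x (sp k) := by
        rw [hmk_nsmul, LocalizedModule.mk_eq]
        refine ⟨1, ?_⟩
        simp only [one_smul, Submonoid.smul_def, OneMemClass.coe_one]
        show ((p : ℤ) ^ k) • x = (p ^ k) • x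
        rw [← Nat.cast_pow, natCast_zsmul]
      have h0 : ψ 0 x = 0 := by
        rw [← hgmk1, hmk1, map_nsmul, hz, smul_zero]
      obtain ⟨m, hm⟩ := (hker 0 _).mp h0
      have hx := htor m _ hm
      rw [← LocalizedModule.zero_mk (sp k), LocalizedModule.mk_eq]
      refine ⟨sp (3 * m), ?_⟩
      simp only [Submonoid.smul_def, smul_zero]
      show ((p : ℤ) ^ (3 * m)) • (((p : ℤ) ^ k) • x) = 0
      rw [← Nat.cast_pow, ← Nat.cast_pow, natCast_zsmul, natCast_zsmul, smul_smul,
        mul_comm, mul_smul, hx, smul_zero]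
  -- p-divisibility in L (with nsmul)
  have hLdiv : ∀ z : L, ∃ z' : L, p • z' = z := by
    intro z
    induction z using LocalizedModule.induction_on with
    | _ x s =>
      obtain ⟨k, hk⟩ := s.2
      have hs : s = sp k := Subtype.ext hk.symm
      subst hs
      refine ⟨LocalizedModule.mk x (sp (k + 1)), ?_⟩
      rw [hmk_nsmul, hmk_shift]
  -- surjectivity of g
  have hgsur : Function.Surjective g := by
    have key : ∀ (n : ℕ) (x : P), ∃ z : L, g z = ψ n x := by
      intro n
      induction n with
      | zero => intro x; exact ⟨LocalizedModule.mk x 1, hgmk1 x⟩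
      | succ n ih =>
        intro x
        obtain ⟨s, hsT, hst⟩ := hTdiv' (n + 1) _ (hφ x)
        have h1 : ψ (n + 1) (φ x - (p ^ 2) • x) = ψ 0 s := by
          have h2 := hcompat' (n + 1) 0 s
          rw [(hTit (n + 1) s hsT).1, hst] at h2
          simpa using h2
        have h3 : (p ^ 2) • (ψ (n + 1) x) = ψ n x - ψ 0 s := by
          rw [← map_nsmul, ← h1, ← hcompat n x, ← map_sub, sub_sub_cancel]
        obtain ⟨z1, hz1⟩ := ih x
        obtain ⟨z2, hz2⟩ := hLdiv (z1 - LocalizedModule.mk s 1)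
        obtain ⟨z3, hz3⟩ := hLdiv z2
        refine ⟨z3, ?_⟩
        have h4 : (p ^ 2) • g z3 = (p ^ 2) • ψ (n + 1) x := by
          have h5 : p • (p • g z3) = g z1 - g (LocalizedModule.mk s 1) := by
            rw [← map_nsmul, hz3, ← map_nsmul, hz2, map_sub]
          have h6 : (p ^ 2) • g z3 = p • (p • g z3) := by
            rw [smul_smul, pow_two]
          rw [h6, h5, hz1, hgmk1, h3]
        have h7 : ∀ c : C, (p ^ 2) • c = 0 → c = 0 := by
          intro c hc
          apply hinjC
          apply hinjC
          rw [smul_smul, ← pow_two]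
          exact hc
        have h8 := h7 (g z3 - ψ (n + 1) x) (by rw [smul_sub, h4, sub_self])
        exact sub_eq_zero.mp h8
    intro c
    obtain ⟨n, x, rfl⟩ := hexhaust c
    exact key n x
  let gadd : L →+ C :=
    { toFun := g, map_zero' := map_zero g, map_add' := map_add g }
  exact ⟨(AddEquiv.ofBijective gadd ⟨hginj, hgsur⟩).symm⟩
end
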